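/- Let C ⊆ ℝⁿ be a closed convex cone. If A₀ is a real n×n matrix such that exp(tA₀) maps C onto C for every t ∈ ℝ, and A₁ is a real n×n matrix with A₁(C) ⊆ C, then A₀ + A₁ ∈ M(C). -/

import Mathlib

/-!
By the Lie–Trotter product formula, `exp (t • (A₀ + A₁))` is the limit of
`(exp ((t / k) • A₀) * (1 + (t / k) • A₁)) ^ k`. Both factors map `C` into `C`: the first by
hypothesis, the second because a convex set stable under positive scaling is stable under
addition. The matrices mapping `C` into `C` form a closed monoid, so the limit maps `C` into `C`.

The product formula holds in any Banach algebra in the form: if `k • (P k - 1) → B`, then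
`P k ^ k → exp B`. Indeed `exp (k⁻¹ • B)` satisfies the same hypothesis, both sequences have norm
at most `1 + c / k` eventually, and `‖x ^ k - y ^ k‖ ≤ k * M ^ k * ‖x - y‖` for `‖x‖, ‖y‖ ≤ M`
turns `‖P k - exp (k⁻¹ • B)‖ = o(1 / k)` into `‖P k ^ k - exp B‖ → 0`.
-/

open Matrix

/-- `A ∈ M(C)`: for every `t ≥ 0` the matrix exponential `exp(tA)` maps `C` into `C`. -/
def memM {n : ℕ} (C : Set (Fin n → ℝ)) (A : Matrix (Fin n) (Fin n) ℝ) : Prop :=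
  ∀ t : ℝ, 0 ≤ t → ∀ x ∈ C, (NormedSpace.exp (t • A)).mulVec x ∈ C

open NormedSpace Filter Topology Set

theorem HasDerivAt.tendsto_natCast_smul_sub {E : Type*} [NormedAddCommGroup E] [NormedSpace ℝ E]
    {F : ℝ → E} {F' : E} (hF : HasDerivAt F F' 0) :
    Tendsto (fun k : ℕ => (k : ℝ) • (F (k : ℝ)⁻¹ - F 0)) atTop (𝓝 F') := by
  have h := hF.tendsto_slope_zero_right.comp
    (tendsto_inv_atTop_nhdsGT_zero.comp tendsto_natCast_atTop_atTop)
  simpa only [Function.comp_def, zero_add, inv_inv] using h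

section ProductFormula

variable {𝔸 : Type*} [NormedRing 𝔸]

theorem norm_pow_sub_pow_le [NormOneClass 𝔸] {x y : 𝔸} {M : ℝ} (hM : 1 ≤ M) (hx : ‖x‖ ≤ M)
    (hy : ‖y‖ ≤ M) (k : ℕ) : ‖x ^ k - y ^ k‖ ≤ k * M ^ k * ‖x - y‖ := by
  induction k with
  | zero => simp
  | succ k ih =>
    have hxk : ‖x ^ k‖ ≤ M ^ k := (norm_pow_le x k).trans (by gcongr)
    calc ‖x ^ (k + 1) - y ^ (k + 1)‖
        = ‖x ^ k * (x - y) + (x ^ k - y ^ k) * y‖ := by noncomm_ring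
      _ ≤ ‖x ^ k‖ * ‖x - y‖ + ‖x ^ k - y ^ k‖ * ‖y‖ :=
          (norm_add_le _ _).trans (add_le_add (norm_mul_le _ _) (norm_mul_le _ _))
      _ ≤ M ^ k * ‖x - y‖ + (k * M ^ k * ‖x - y‖) * M := by gcongr
      _ ≤ M ^ (k + 1) * ‖x - y‖ + k * M ^ (k + 1) * ‖x - y‖ :=
          add_le_add (by gcongr; omega) (le_of_eq (by ring))
      _ = (k + 1 : ℕ) * M ^ (k + 1) * ‖x - y‖ := by push_cast; ring

variable [NormedAlgebra ℝ 𝔸]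

theorem eventually_norm_le_one_add_div [NormOneClass 𝔸] {P : ℕ → 𝔸} {B : 𝔸}
    (hP : Tendsto (fun k : ℕ => (k : ℝ) • (P k - 1)) atTop (𝓝 B)) {c : ℝ} (hc : ‖B‖ < c) :
    ∀ᶠ k : ℕ in atTop, ‖P k‖ ≤ 1 + c / k := by
  filter_upwards [hP.norm.eventually (gt_mem_nhds hc), eventually_gt_atTop 0] with k hk hk0
  have hk0' : (0 : ℝ) < k := Nat.cast_pos.mpr hk0
  rw [norm_smul, Real.norm_natCast] at hk
  calc ‖P k‖ = ‖1 + (P k - 1)‖ := by rw [add_sub_cancel]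
    _ ≤ 1 + ‖P k - 1‖ := (norm_add_le _ _).trans_eq (by rw [norm_one])
    _ ≤ 1 + c / k := by gcongr; rw [le_div_iff₀ hk0', mul_comm]; exact hk.le

theorem exp_inv_natCast_smul_pow [CompleteSpace 𝔸] {k : ℕ} (hk : k ≠ 0) (x : 𝔸) :
    exp ((k : ℝ)⁻¹ • x) ^ k = exp x := by
  let _ : NormedAlgebra ℚ 𝔸 := NormedAlgebra.restrictScalars ℚ ℝ 𝔸
  rw [← NormedSpace.exp_nsmul, ← Nat.cast_smul_eq_nsmul ℝ, smul_smul,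
    mul_inv_cancel₀ (Nat.cast_ne_zero.mpr hk), one_smul]

theorem tendsto_pow_of_tendsto_smul_sub_one [NormOneClass 𝔸] [CompleteSpace 𝔸] {P : ℕ → 𝔸}
    {B : 𝔸} (hP : Tendsto (fun k : ℕ => (k : ℝ) • (P k - 1)) atTop (𝓝 B)) :
    Tendsto (fun k : ℕ => P k ^ k) atTop (𝓝 (exp B)) := by
  set S : ℕ → 𝔸 := fun k => exp ((k : ℝ)⁻¹ • B)
  have hS : Tendsto (fun k : ℕ => (k : ℝ) • (S k - 1)) atTop (𝓝 B) := by
    simpa [S] using (hasDerivAt_exp_smul_const (𝕂 := ℝ) B 0).tendsto_natCast_smul_sub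
  have hPS : Tendsto (fun k : ℕ => ‖(k : ℝ) • (P k - S k)‖) atTop (𝓝 0) := by
    simpa [smul_sub] using (hP.sub hS).norm
  set c := ‖B‖ + 1
  have hexp (k : ℕ) : (1 + c / k) ^ k ≤ Real.exp c := by
    have hc : -c ≤ k := by linarith [norm_nonneg B, k.cast_nonneg (α := ℝ)]
    simpa [neg_div] using Real.one_sub_div_pow_le_exp_neg hc
  rw [← tendsto_sub_nhds_zero_iff]
  refine squeeze_zero_norm' ?_ (by simpa using hPS.const_mul (Real.exp c))
  filter_upwards [eventually_norm_le_one_add_div hP (lt_add_one _),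
    eventually_norm_le_one_add_div hS (lt_add_one _), eventually_ne_atTop 0] with k hPk hSk hk
  have hM : 1 ≤ 1 + c / k := le_add_of_nonneg_right (by positivity)
  calc ‖P k ^ k - exp B‖ = ‖P k ^ k - S k ^ k‖ := by rw [exp_inv_natCast_smul_pow hk]
    _ ≤ k * (1 + c / k) ^ k * ‖P k - S k‖ := norm_pow_sub_pow_le hM hPk hSk k
    _ ≤ Real.exp c * ‖(k : ℝ) • (P k - S k)‖ := by
        rw [norm_smul, Real.norm_natCast, mul_comm (k : ℝ), mul_assoc]
        gcongr
        exact hexp k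

theorem tendsto_exp_smul_mul_one_add_smul_pow [NormOneClass 𝔸] [CompleteSpace 𝔸] (a b : 𝔸) :
    Tendsto (fun k : ℕ => (exp ((k : ℝ)⁻¹ • a) * (1 + (k : ℝ)⁻¹ • b)) ^ k) atTop
      (𝓝 (exp (a + b))) := by
  have hderiv : HasDerivAt (fun h : ℝ => exp (h • a) * (1 + h • b)) (a + b) 0 :=
    ((hasDerivAt_exp_smul_const (𝕂 := ℝ) a 0).mul
      (((hasDerivAt_id (0 : ℝ)).smul_const b).const_add 1)).congr_deriv (by simp)
  refine tendsto_pow_of_tendsto_smul_sub_one ?_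
  simpa using hderiv.tendsto_natCast_smul_sub

end ProductFormula

theorem Convex.add_mem_of_smul_mem {E : Type*} [AddCommGroup E] [Module ℝ E] {C : Set E}
    (hconv : Convex ℝ C) (hcone : ∀ x ∈ C, ∀ t : ℝ, 0 < t → t • x ∈ C) {x y : E}
    (hx : x ∈ C) (hy : y ∈ C) : x + y ∈ C := by
  have h := hcone _ (hconv hx hy (by norm_num) (by norm_num) (add_halves 1)) 2 two_pos
  rwa [smul_add, smul_smul, smul_smul, mul_one_div_cancel two_ne_zero, one_smul, one_smul] at h

namespace Matrix

variable {m R : Type*} [Fintype m] [DecidableEq m]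

def mapsToSubmonoid [Semiring R] (C : Set (m → R)) : Submonoid (Matrix m m R) where
  carrier := {M | MapsTo (M *ᵥ ·) C C}
  mul_mem' {M N} hM hN x hx := by
    simpa only [mulVec_mulVec] using hM (hN hx)
  one_mem' x hx := by simpa only [one_mulVec] using hx

theorem mem_mapsToSubmonoid [Semiring R] {C : Set (m → R)} {M : Matrix m m R} :
    M ∈ mapsToSubmonoid C ↔ MapsTo (M *ᵥ ·) C C := Iff.rfl

theorem isClosed_mapsToSubmonoid [Semiring R] [TopologicalSpace R] [IsTopologicalSemiring R]
    {C : Set (m → R)} (hC : IsClosed C) : IsClosed (mapsToSubmonoid C : Set (Matrix m m R)) := by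
  simp only [mapsToSubmonoid, Submonoid.coe_set_mk, Subsemigroup.coe_set_mk, MapsTo, ofPred_forall]
  exact isClosed_iInter fun x => isClosed_iInter fun _ =>
    hC.preimage (continuous_id.matrix_mulVec continuous_const)

theorem one_add_smul_mem_mapsToSubmonoid {C : Set (m → ℝ)} (hconv : Convex ℝ C)
    (hcone : ∀ x ∈ C, ∀ t : ℝ, 0 < t → t • x ∈ C) {A : Matrix m m ℝ}
    (hA : MapsTo (A *ᵥ ·) C C) {s : ℝ} (hs : 0 ≤ s) : 1 + s • A ∈ mapsToSubmonoid C := by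
  intro x hx
  simp only [add_mulVec, one_mulVec, smul_mulVec]
  rcases hs.eq_or_lt with rfl | hs
  · simpa using hx
  · exact hconv.add_mem_of_smul_mem hcone hx (hcone _ (hA hx) s hs)

end Matrix

/-- If `exp(tA₀)` maps `C` onto `C` for every real `t`, and `A₁` maps `C` into `C`,
then `A₀ + A₁ ∈ M(C)`. -/
theorem lieAut_add_end_mem_M {n : ℕ} (C : Set (Fin n → ℝ))
    (hclosed : IsClosed C) (hconv : Convex ℝ C)
    (hcone : ∀ x ∈ C, ∀ t : ℝ, 0 < t → t • x ∈ C)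
    (A₀ A₁ : Matrix (Fin n) (Fin n) ℝ)
    (hA₀ : ∀ t : ℝ, (NormedSpace.exp (t • A₀)).mulVec '' C = C)
    (hA₁ : ∀ x ∈ C, A₁.mulVec x ∈ C) :
    memM C (A₀ + A₁) := by
  intro t ht
  -- The `L∞` operator norm satisfies `‖1‖ = 1` only over a nonempty index type.
  rcases isEmpty_or_nonempty (Fin n) with hn | hn
  · intro x hx
    rwa [Subsingleton.elim (exp (t • (A₀ + A₁)) *ᵥ x) x]
  let _ : NormedRing (Matrix (Fin n) (Fin n) ℝ) := Matrix.linftyOpNormedRing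
  let _ : NormedAlgebra ℝ (Matrix (Fin n) (Fin n) ℝ) := Matrix.linftyOpNormedAlgebra
  have hstep (k : ℕ) :
      exp ((k : ℝ)⁻¹ • (t • A₀)) * (1 + (k : ℝ)⁻¹ • (t • A₁)) ∈ mapsToSubmonoid C := by
    rw [smul_smul, smul_smul]
    refine mul_mem ?_ (one_add_smul_mem_mapsToSubmonoid hconv hcone hA₁ (by positivity))
    rw [mem_mapsToSubmonoid, mapsTo_iff_image_subset]
    exact (hA₀ _).subset
  have hlim := tendsto_exp_smul_mul_one_add_smul_pow (t • A₀) (t • A₁)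
  rw [← smul_add] at hlim
  exact (isClosed_mapsToSubmonoid hclosed).mem_of_tendsto hlim
    (.of_forall fun k => pow_mem (hstep k) k)
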